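/- arXiv:2407.02051 — 2 statements merged into one kernel-verified Lean document; each statement's English description precedes it below -/
import Mathlib

section
/- Let L be a bounded lattice, ϱ ∈ L∖{0,1}, U* a uninorm on [0,ϱ] with neutral element e, and q ∈ I_ϱ^e. Assume that x ∨ q = 1 for all x ∈ I_{e,ϱ} with x ∥ q, and that I_ϱ^e ∪ I_{e,ϱ} ∪ (ϱ,1) ≠ ∅. Then the function U_q given by formula (1) is a uninorm on L with neutral element e if and only if U* ∈ U_b and x ∥ y for all x ∈ I_{e,ϱ} with x ∦ q and all y ∈ I_e^ϱ. -/
attribute [local instance] Classical.propDecidable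

variable {L : Type*}

/-- `a` and `b` are incomparable. -/
def Incomp [Lattice L] (a b : L) : Prop := ¬ a ≤ b ∧ ¬ b ≤ a

/-- `U` is a uninorm on the subset `S` of the bounded lattice `L` with neutral element `e`:
it maps `S × S` into `S`, is commutative, associative, increasing in each variable on `S`,
and has `e ∈ S` as neutral element. -/
def IsUninormOn [Lattice L] [BoundedOrder L] (U : L → L → L) (S : Set L) (e : L) : Prop :=
  e ∈ S ∧
  (∀ x ∈ S, ∀ y ∈ S, U x y ∈ S) ∧
  (∀ x ∈ S, ∀ y ∈ S, U x y = U y x) ∧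
  (∀ x ∈ S, ∀ y ∈ S, ∀ z ∈ S, U (U x y) z = U x (U y z)) ∧
  (∀ x ∈ S, ∀ y ∈ S, ∀ z ∈ S, x ≤ y → U x z ≤ U y z ∧ U z x ≤ U z y) ∧
  (∀ x ∈ S, U e x = x ∧ U x e = x)

/-- Formula (1): the function `U_q` built from a uninorm `Ustar` on `[⊥, ϱ]` with neutral
element `e` and an element `q ∈ L`. Here `[⊥, ϱ] = {x | x ≤ ϱ}`, `[⊥, e] = {x | x ≤ e}`,
`I_{e,ϱ} = {x | x ∥ e ∧ x ∥ ϱ}`. -/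
noncomputable def Uq [Lattice L] [BoundedOrder L] (Ustar : L → L → L) (ϱ e q : L)
    (x y : L) : L :=
  if x ≤ ϱ ∧ y ≤ ϱ then Ustar x y
  else if ¬ x ≤ ϱ ∧ y ≤ e then x
  else if x ≤ e ∧ ¬ y ≤ ϱ then y
  else if (Incomp x e ∧ Incomp x ϱ) ∧ (Incomp y e ∧ Incomp y ϱ) then x ⊔ y ⊔ q
  else ⊤

section Aux

variable [Lattice L] [BoundedOrder L] {ϱ e q : L} {Ustar : L → L → L}

lemma uq_low {x y : L} (hx : x ≤ ϱ) (hy : y ≤ ϱ) :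
    Uq Ustar ϱ e q x y = Ustar x y := by
  unfold Uq; rw [if_pos ⟨hx, hy⟩]

lemma uq_left {x y : L} (hx : ¬ x ≤ ϱ) (hy : y ≤ e) :
    Uq Ustar ϱ e q x y = x := by
  unfold Uq
  rw [if_neg (fun h => hx h.1), if_pos ⟨hx, hy⟩]

lemma uq_right (he : e ≤ ϱ) {x y : L} (hx : x ≤ e) (hy : ¬ y ≤ ϱ) :
    Uq Ustar ϱ e q x y = y := by
  unfold Uq
  rw [if_neg (fun h => hy h.2), if_neg (fun h => h.1 (hx.trans he)), if_pos ⟨hx, hy⟩]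

lemma uq_jj {x y : L} (hx : Incomp x e ∧ Incomp x ϱ) (hy : Incomp y e ∧ Incomp y ϱ) :
    Uq Ustar ϱ e q x y = x ⊔ y ⊔ q := by
  unfold Uq
  rw [if_neg (fun h => hx.2.1 h.1), if_neg (fun h => hy.1.1 h.2),
    if_neg (fun h => hx.1.1 h.1), if_pos ⟨hx, hy⟩]

lemma uq_M_high {x y : L} (hx : x ≤ ϱ) (hxe : ¬ x ≤ e) (hy : ¬ y ≤ ϱ) :
    Uq Ustar ϱ e q x y = ⊤ := by
  unfold Uq
  rw [if_neg (fun h => hy h.2), if_neg (fun h => h.1 hx), if_neg (fun h => hxe h.1),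
    if_neg (fun h => h.1.2.1 hx)]

lemma uq_high_M {x y : L} (hx : ¬ x ≤ ϱ) (hy : y ≤ ϱ) (hye : ¬ y ≤ e) :
    Uq Ustar ϱ e q x y = ⊤ := by
  unfold Uq
  rw [if_neg (fun h => hx h.1), if_neg (fun h => hye h.2), if_neg (fun h => h.2 hy),
    if_neg (fun h => h.2.2.1 hy)]

lemma uq_high_T (he : e ≤ ϱ) {x y : L} (hx : ¬ x ≤ ϱ) (hy : ¬ y ≤ ϱ) (hey : e ≤ y) :
    Uq Ustar ϱ e q x y = ⊤ := by
  unfold Uq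
  rw [if_neg (fun h => hx h.1), if_neg (fun h => hy (h.2.trans he)),
    if_neg (fun h => hx (h.1.trans he)), if_neg (fun h => h.2.1.2 hey)]

lemma uq_T_high (he : e ≤ ϱ) {x y : L} (hx : ¬ x ≤ ϱ) (hex : e ≤ x) (hy : ¬ y ≤ ϱ) :
    Uq Ustar ϱ e q x y = ⊤ := by
  unfold Uq
  rw [if_neg (fun h => hx h.1), if_neg (fun h => hy (h.2.trans he)),
    if_neg (fun h => hx (h.1.trans he)), if_neg (fun h => h.1.1.2 hex)]

lemma uq_not_low (hϱ1 : ϱ ≠ ⊤) (hq : ¬ q ≤ ϱ) {y : L} (hy : ¬ y ≤ ϱ) (z : L) :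
    ¬ Uq Ustar ϱ e q y z ≤ ϱ := by
  unfold Uq
  split_ifs with h1 h2 h3 h4
  · exact absurd h1.1 hy
  · exact hy
  · exact h3.2
  · exact fun h => hq (le_sup_right.trans h)
  · exact fun h => hϱ1 (top_le_iff.mp h)

lemma uq_top_left (he : e ≤ ϱ) (hϱ1 : ϱ ≠ ⊤) (z : L) :
    Uq Ustar ϱ e q (⊤ : L) z = ⊤ := by
  have ht : ¬ (⊤ : L) ≤ ϱ := fun h => hϱ1 (top_le_iff.mp h)
  by_cases hz : z ≤ e
  · exact uq_left ht hz
  · by_cases hzϱ : z ≤ ϱ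
    · exact uq_high_M ht hzϱ hz
    · exact uq_T_high he ht le_top hzϱ

lemma uq_top_right (he : e ≤ ϱ) (hϱ1 : ϱ ≠ ⊤) (x : L) :
    Uq Ustar ϱ e q x (⊤ : L) = ⊤ := by
  have ht : ¬ (⊤ : L) ≤ ϱ := fun h => hϱ1 (top_le_iff.mp h)
  by_cases hx : x ≤ e
  · exact uq_right he hx ht
  · by_cases hxϱ : x ≤ ϱ
    · exact uq_M_high hxϱ hx ht
    · exact uq_high_T he hxϱ ht le_top

lemma high_not_J (he : e ≤ ϱ) {y : L} (h1 : ¬ y ≤ ϱ)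
    (h2 : ¬ (Incomp y e ∧ Incomp y ϱ)) : e ≤ y := by
  by_contra hey
  exact h2 ⟨⟨fun h => h1 (h.trans he), hey⟩, ⟨h1, fun h => hey (he.trans h)⟩⟩

end Aux

theorem statement3 [Lattice L] [BoundedOrder L]
    (ϱ e q : L) (Ustar : L → L → L)
    (hϱ0 : ϱ ≠ ⊥) (hϱ1 : ϱ ≠ ⊤)
    (hU : IsUninormOn Ustar {x : L | x ≤ ϱ} e)
    (hq : Incomp q ϱ ∧ ¬ Incomp q e)
    (hjq : ∀ x : L, Incomp x e → Incomp x ϱ → Incomp x q → x ⊔ q = ⊤)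
    (hne : ∃ x : L, (Incomp x ϱ ∧ ¬ Incomp x e) ∨ (Incomp x e ∧ Incomp x ϱ) ∨
      (ϱ < x ∧ x < ⊤)) :
    IsUninormOn (Uq Ustar ϱ e q) Set.univ e ↔
      ((∀ x ≤ ϱ, ∀ y ≤ ϱ, Ustar x y ≤ e → x ≤ e ∧ y ≤ e) ∧
        ∀ x y : L, Incomp x e → Incomp x ϱ → ¬ Incomp x q →
          Incomp y e → ¬ Incomp y ϱ → Incomp x y) := by
  obtain ⟨heS, hcl, hcomm, hassoc, hmono, hneut⟩ := hU
  have he : e ≤ ϱ := heS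
  have hqϱ : ¬ q ≤ ϱ := hq.1.1
  have hϱq : ¬ ϱ ≤ q := hq.1.2
  have heq : e ≤ q := by
    by_contra h
    have hqe : q ≤ e := by
      by_contra h2
      exact hq.2 ⟨h2, h⟩
    exact hqϱ (hqe.trans he)
  constructor
  · rintro ⟨-, -, -, hUa, hUm, -⟩
    obtain ⟨z, hz⟩ := hne
    have hzϱ : ¬ z ≤ ϱ := by
      rcases hz with ⟨h, -⟩ | ⟨-, h⟩ | ⟨h, -⟩
      · exact h.1
      · exact h.1
      · exact h.not_ge
    have hzt : z ≠ ⊤ := by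
      rcases hz with ⟨h, -⟩ | ⟨-, h⟩ | ⟨-, h⟩
      · exact fun ht => h.2 (le_top.trans ht.ge)
      · exact fun ht => h.2 (le_top.trans ht.ge)
      · exact h.ne
    constructor
    · intro x hx y hy hxy
      have hx' : x ≤ e := by
        by_contra hxe
        have h1 := hUa z (Set.mem_univ z) x (Set.mem_univ x) y (Set.mem_univ y)
        rw [uq_high_M hzϱ hx hxe, uq_top_left he hϱ1 y, uq_low hx hy,
          uq_left hzϱ hxy] at h1
        exact hzt h1.symm
      have hy' : y ≤ e := by
        by_contra hye
        have h1 := hUa z (Set.mem_univ z) x (Set.mem_univ x) y (Set.mem_univ y)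
        rw [uq_left hzϱ hx', uq_high_M hzϱ hy hye, uq_low hx hy,
          uq_left hzϱ hxy] at h1
        exact hzt h1.symm
      exact ⟨hx', hy'⟩
    · intro x y hxe hxϱ hxq hye hyϱ
      have hxq' : x ≤ q := by
        by_contra h
        have hqx : q ≤ x := by
          by_contra h2
          exact hxq ⟨h, h2⟩
        exact hxe.2 (heq.trans hqx)
      have hyϱ' : y ≤ ϱ := by
        by_contra h
        have hϱy : ϱ ≤ y := by
          by_contra h2
          exact hyϱ ⟨h, h2⟩
        exact hye.2 (he.trans hϱy)
      refine ⟨fun h => hxϱ.1 (h.trans hyϱ'), fun hyx => ?_⟩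
      have hm := (hUm y (Set.mem_univ y) x (Set.mem_univ x) x (Set.mem_univ x) hyx).1
      rw [uq_M_high hyϱ' hye.1 hxϱ.1, uq_jj ⟨hxe, hxϱ⟩ ⟨hxe, hxϱ⟩] at hm
      have htop : x ⊔ x ⊔ q = ⊤ := top_le_iff.mp hm
      rw [sup_idem, sup_eq_right.mpr hxq'] at htop
      exact hϱq (le_top.trans_eq htop.symm)
  · rintro ⟨hUb, hcond⟩
    have hSc : ∀ x ≤ ϱ, ∀ y ≤ ϱ, Ustar x y ≤ ϱ := fun x hx y hy => hcl x hx y hy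
    have hAc : ∀ x ≤ e, ∀ y ≤ e, Ustar x y ≤ e := by
      intro x hx y hy
      have h1 := (hmono x (hx.trans he) e he y (hy.trans he) hx).1
      rw [(hneut y (hy.trans he)).1] at h1
      exact h1.trans hy
    have hMc : ∀ x ≤ ϱ, ∀ y ≤ ϱ, ¬ x ≤ e → ¬ Ustar x y ≤ e :=
      fun x hx y hy hxe h => hxe (hUb x hx y hy h).1
    have hMc' : ∀ x ≤ ϱ, ∀ y ≤ ϱ, ¬ y ≤ e → ¬ Ustar x y ≤ e :=
      fun x hx y hy hye h => hye (hUb x hx y hy h).2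
    -- commutativity
    have hcm : ∀ x y : L, Uq Ustar ϱ e q x y = Uq Ustar ϱ e q y x := by
      intro x y
      by_cases hx : x ≤ ϱ <;> by_cases hy : y ≤ ϱ
      · rw [uq_low hx hy, uq_low hy hx]; exact hcomm x hx y hy
      · by_cases hxe : x ≤ e
        · rw [uq_right he hxe hy, uq_left hy hxe]
        · rw [uq_M_high hx hxe hy, uq_high_M hy hx hxe]
      · by_cases hye : y ≤ e
        · rw [uq_left hx hye, uq_right he hye hx]
        · rw [uq_high_M hx hy hye, uq_M_high hy hye hx]
      · by_cases hxJ : Incomp x e ∧ Incomp x ϱ <;>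
          by_cases hyJ : Incomp y e ∧ Incomp y ϱ
        · rw [uq_jj hxJ hyJ, uq_jj hyJ hxJ, sup_comm x y]
        · have hey := high_not_J he hy hyJ
          rw [uq_high_T he hx hy hey, uq_T_high he hy hey hx]
        · have hex := high_not_J he hx hxJ
          rw [uq_T_high he hx hex hy, uq_high_T he hy hx hex]
        · rw [uq_T_high he hx (high_not_J he hx hxJ) hy,
            uq_T_high he hy (high_not_J he hy hyJ) hx]
    -- neutrality
    have hneu : ∀ x : L, Uq Ustar ϱ e q e x = x ∧ Uq Ustar ϱ e q x e = x := by
      intro x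
      by_cases hx : x ≤ ϱ
      · rw [uq_low he hx, uq_low hx he]
        exact ⟨(hneut x hx).1, (hneut x hx).2⟩
      · rw [uq_right he le_rfl hx, uq_left hx le_rfl]
        exact ⟨rfl, rfl⟩
    -- monotonicity in the first variable
    have hmonol : ∀ x y z : L, x ≤ y → Uq Ustar ϱ e q x z ≤ Uq Ustar ϱ e q y z := by
      intro x y z hxy
      by_cases hz : z ≤ ϱ
      · by_cases hy : y ≤ ϱ
        · have hx : x ≤ ϱ := hxy.trans hy
          rw [uq_low hx hz, uq_low hy hz]
          exact (hmono x hx y hy z hz hxy).1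
        · by_cases hze : z ≤ e
          · rw [uq_left hy hze]
            by_cases hx : x ≤ ϱ
            · rw [uq_low hx hz]
              calc Ustar x z ≤ Ustar x e := (hmono z (hze.trans he) e he x hx hze).2
                _ = x := (hneut x hx).2
                _ ≤ y := hxy
            · rw [uq_left hx hze]; exact hxy
          · rw [uq_high_M hy hz hze]; exact le_top
      · by_cases hzJ : Incomp z e ∧ Incomp z ϱ
        · by_cases hy : y ≤ ϱ
          · have hx : x ≤ ϱ := hxy.trans hy
            by_cases hye : y ≤ e
            · rw [uq_right he (hxy.trans hye) hz, uq_right he hye hz]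
            · rw [uq_M_high hy hye hz]; exact le_top
          · by_cases hyJ : Incomp y e ∧ Incomp y ϱ
            · rw [uq_jj hyJ hzJ]
              by_cases hx : x ≤ ϱ
              · by_cases hxe : x ≤ e
                · rw [uq_right he hxe hz]
                  exact le_sup_right.trans le_sup_left
                · rw [uq_M_high hx hxe hz]
                  have hxIe : Incomp x e := ⟨hxe, fun h => hyJ.1.2 (h.trans hxy)⟩
                  have hyq : Incomp y q := by
                    by_contra hq2
                    exact (hcond y x hyJ.1 hyJ.2 hq2 hxIe (fun hc => hc.1 hx)).2 hxy
                  have h1 : y ⊔ q = ⊤ := hjq y hyJ.1 hyJ.2 hyq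
                  calc (⊤ : L) = y ⊔ q := h1.symm
                    _ ≤ y ⊔ z ⊔ q := sup_le_sup le_sup_left le_rfl
              · by_cases hxJ : Incomp x e ∧ Incomp x ϱ
                · rw [uq_jj hxJ hzJ]
                  exact sup_le_sup (sup_le_sup hxy le_rfl) le_rfl
                · exact absurd ((high_not_J he hx hxJ).trans hxy) hyJ.1.2
            · rw [uq_T_high he hy (high_not_J he hy hyJ) hz]; exact le_top
        · have hez := high_not_J he hz hzJ
          by_cases hye : y ≤ e
          · rw [uq_right he (hxy.trans hye) hz, uq_right he hye hz]
          · have h2 : Uq Ustar ϱ e q y z = ⊤ := by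
              by_cases hy : y ≤ ϱ
              · exact uq_M_high hy hye hz
              · exact uq_high_T he hy hz hez
            rw [h2]; exact le_top
    -- associativity
    have hasc : ∀ x y z : L, Uq Ustar ϱ e q (Uq Ustar ϱ e q x y) z
        = Uq Ustar ϱ e q x (Uq Ustar ϱ e q y z) := by
      intro x y z
      by_cases hy : y ≤ ϱ
      · by_cases hye : y ≤ e
        · -- y ∈ A
          by_cases hx : x ≤ ϱ
          · by_cases hz : z ≤ ϱ
            · rw [uq_low hx hy, uq_low hy hz, uq_low (hSc x hx y hy) hz,
                uq_low hx (hSc y hy z hz)]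
              exact hassoc x hx y hy z hz
            · by_cases hxe : x ≤ e
              · rw [uq_low hx hy, uq_right he (hAc x hxe y hye) hz,
                  uq_right he hye hz, uq_right he hxe hz]
              · rw [uq_low hx hy, uq_M_high (hSc x hx y hy) (hMc x hx y hy hxe) hz,
                  uq_right he hye hz, uq_M_high hx hxe hz]
          · rw [uq_left hx hye]
            by_cases hz : z ≤ ϱ
            · by_cases hze : z ≤ e
              · rw [uq_left hx hze, uq_low hy hz, uq_left hx (hAc y hye z hze)]
              · rw [uq_high_M hx hz hze, uq_low hy hz,
                  uq_high_M hx (hSc y hy z hz) (hMc' y hy z hz hze)]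
            · rw [uq_right he hye hz]
        · -- y ∈ M
          by_cases hx : x ≤ ϱ
          · by_cases hz : z ≤ ϱ
            · rw [uq_low hx hy, uq_low hy hz, uq_low (hSc x hx y hy) hz,
                uq_low hx (hSc y hy z hz)]
              exact hassoc x hx y hy z hz
            · rw [uq_low hx hy, uq_M_high (hSc x hx y hy) (hMc' x hx y hy hye) hz,
                uq_M_high hy hye hz, uq_top_right he hϱ1 x]
          · rw [uq_high_M hx hy hye, uq_top_left he hϱ1 z]
            by_cases hz : z ≤ ϱ
            · rw [uq_low hy hz, uq_high_M hx (hSc y hy z hz) (hMc y hy z hz hye)]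
            · rw [uq_M_high hy hye hz, uq_top_right he hϱ1 x]
      · have hfyz : ¬ Uq Ustar ϱ e q y z ≤ ϱ := uq_not_low hϱ1 hqϱ hy z
        by_cases hyJ : Incomp y e ∧ Incomp y ϱ
        · -- y ∈ J
          by_cases hx : x ≤ ϱ
          · by_cases hxe : x ≤ e
            · rw [uq_right he hxe hy, uq_right he hxe hfyz]
            · rw [uq_M_high hx hxe hy, uq_top_left he hϱ1 z, uq_M_high hx hxe hfyz]
          · by_cases hxJ : Incomp x e ∧ Incomp x ϱ
            · rw [uq_jj hxJ hyJ]
              have hs : ¬ x ⊔ y ⊔ q ≤ ϱ := fun h => hqϱ (le_sup_right.trans h)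
              have hes : e ≤ x ⊔ y ⊔ q := heq.trans le_sup_right
              by_cases hz : z ≤ ϱ
              · by_cases hze : z ≤ e
                · rw [uq_left hs hze, uq_left hy hze, uq_jj hxJ hyJ]
                · rw [uq_high_M hs hz hze, uq_high_M hy hz hze,
                    uq_top_right he hϱ1 x]
              · rw [uq_T_high he hs hes hz]
                by_cases hzJ : Incomp z e ∧ Incomp z ϱ
                · rw [uq_jj hyJ hzJ,
                    uq_high_T he hx (fun h => hqϱ (le_sup_right.trans h))
                      (heq.trans le_sup_right)]
                · rw [uq_high_T he hy hz (high_not_J he hz hzJ),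
                    uq_top_right he hϱ1 x]
            · have hex := high_not_J he hx hxJ
              rw [uq_T_high he hx hex hy, uq_top_left he hϱ1 z,
                uq_T_high he hx hex hfyz]
        · -- y ∈ T
          have hey := high_not_J he hy hyJ
          by_cases hx : x ≤ ϱ
          · by_cases hxe : x ≤ e
            · rw [uq_right he hxe hy, uq_right he hxe hfyz]
            · rw [uq_M_high hx hxe hy, uq_top_left he hϱ1 z, uq_M_high hx hxe hfyz]
          · have hefyz : e ≤ Uq Ustar ϱ e q y z := by
              by_cases hz : z ≤ e
              · rw [uq_left hy hz]; exact hey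
              · by_cases hzϱ : z ≤ ϱ
                · rw [uq_high_M hy hzϱ hz]; exact le_top
                · rw [uq_T_high he hy hey hzϱ]; exact le_top
            rw [uq_high_T he hx hy hey, uq_top_left he hϱ1 z,
              uq_high_T he hx hfyz hefyz]
    exact ⟨Set.mem_univ e, fun x _ y _ => Set.mem_univ _,
      fun x _ y _ => hcm x y, fun x _ y _ z _ => hasc x y z,
      fun x _ y _ z _ hxy => ⟨hmonol x y z hxy, by
        rw [hcm z x, hcm z y]; exact hmonol x y z hxy⟩,
      fun x _ => hneu x⟩
end

section
/- Let L be a bounded lattice, σ ∈ L∖{0,1}, U* a uninorm on [σ,1] with neutral element e, and p ∈ (e,1) ∪ I_e^σ. Assume that x ∧ y = 0 for all x, y ∈ I_{e,σ} with x ≠ y, that x ∧ p = 0 for all x ∈ I_{e,σ} with x ∥ p, and that I_σ^e ∪ I_{e,σ} ∪ (0,σ) ≠ ∅. Then the function U_p given by formula (2) is a uninorm on L with neutral element e if and only if U* ∈ U_t and x ∥ y for all x ∈ I_{e,σ} with x ∦ p and all y ∈ I_e^σ. -/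
attribute [local instance] Classical.propDecidable

variable {L : Type*}

/-- Formula (2): the function `U_p` built from a uninorm `Ustar` on `[σ, ⊤]` with neutral
element `e` and an element `p ∈ L`. Here `[σ, ⊤] = {x | σ ≤ x}`, `[e, ⊤] = {x | e ≤ x}`,
`I_{e,σ} = {x | x ∥ e ∧ x ∥ σ}`. -/
noncomputable def Up [Lattice L] [BoundedOrder L] (Ustar : L → L → L) (σ e p : L)
    (x y : L) : L :=
  if σ ≤ x ∧ σ ≤ y then Ustar x y
  else if ¬ σ ≤ x ∧ e ≤ y then x
  else if e ≤ x ∧ ¬ σ ≤ y then y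
  else if (Incomp x e ∧ Incomp x σ) ∧ (Incomp y e ∧ Incomp y σ) then x ⊓ y ⊓ p
  else ⊥

section Aux
set_option linter.unusedSectionVars false
set_option linter.unusedVariables false
variable [Lattice L] [BoundedOrder L] {σ e p : L} {Ustar : L → L → L}

lemma up_eq1 {x y : L} (hx : σ ≤ x) (hy : σ ≤ y) : Up Ustar σ e p x y = Ustar x y := by
  unfold Up; rw [if_pos ⟨hx, hy⟩]

lemma up_eq2 {x y : L} (hx : ¬ σ ≤ x) (hy : e ≤ y) : Up Ustar σ e p x y = x := by
  unfold Up; rw [if_neg (fun h => hx h.1), if_pos ⟨hx, hy⟩]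

lemma up_eq3 (hσe : σ ≤ e) {x y : L} (hx : e ≤ x) (hy : ¬ σ ≤ y) :
    Up Ustar σ e p x y = y := by
  unfold Up
  rw [if_neg (fun h => hy h.2), if_neg (fun h => h.1 (hσe.trans hx)), if_pos ⟨hx, hy⟩]

lemma up_eq4 {x y : L} (hx : Incomp x e ∧ Incomp x σ) (hy : Incomp y e ∧ Incomp y σ) :
    Up Ustar σ e p x y = x ⊓ y ⊓ p := by
  unfold Up
  rw [if_neg (fun h => hx.2.2 h.1), if_neg (fun h => hy.1.2 h.2),
    if_neg (fun h => hx.1.2 h.1), if_pos ⟨hx, hy⟩]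

lemma up_eq_bot {x y : L} (hx : ¬ e ≤ x) (hy : ¬ e ≤ y)
    (h1 : ¬ σ ≤ x ∨ ¬ σ ≤ y)
    (h4 : ¬ (Incomp x e ∧ Incomp x σ) ∨ ¬ (Incomp y e ∧ Incomp y σ)) :
    Up Ustar σ e p x y = ⊥ := by
  unfold Up
  rw [if_neg (fun h => h1.elim (fun a => a h.1) (fun a => a h.2)),
    if_neg (fun h => hy h.2), if_neg (fun h => hx h.1),
    if_neg (fun h => h4.elim (fun a => a h.1) (fun a => a h.2))]

lemma up_bot_left (hσe : σ ≤ e) (hσ0 : σ ≠ ⊥) (y : L) : Up Ustar σ e p ⊥ y = ⊥ := by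
  have hbσ : ¬ σ ≤ (⊥ : L) := fun h => hσ0 (le_bot_iff.mp h)
  have hbe : ¬ e ≤ (⊥ : L) := fun h => hbσ (hσe.trans h)
  by_cases he : e ≤ y
  · exact up_eq2 hbσ he
  · exact up_eq_bot hbe he (Or.inl hbσ) (Or.inl (fun hc => hc.1.1 bot_le))

lemma up_bot_right (hσe : σ ≤ e) (hσ0 : σ ≠ ⊥) (x : L) : Up Ustar σ e p x ⊥ = ⊥ := by
  have hbσ : ¬ σ ≤ (⊥ : L) := fun h => hσ0 (le_bot_iff.mp h)
  have hbe : ¬ e ≤ (⊥ : L) := fun h => hbσ (hσe.trans h)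
  by_cases he : e ≤ x
  · exact up_eq3 hσe he hbσ
  · exact up_eq_bot he hbe (Or.inr hbσ) (Or.inr (fun hc => hc.1.1 bot_le))

lemma p_nle (hσe : σ ≤ e)
    (hp : (e < p ∧ p < ⊤) ∨ (Incomp p e ∧ ¬ Incomp p σ))
    {x : L} (hx : Incomp x e ∧ Incomp x σ) : ¬ p ≤ x := by
  intro h
  rcases hp with ⟨h1, _⟩ | ⟨h1, h2⟩
  · exact hx.1.2 (h1.le.trans h)
  · rcases not_and_or.mp h2 with h3 | h3
    · exact h1.1 ((not_not.mp h3).trans hσe)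
    · exact hx.2.2 ((not_not.mp h3).trans h)

lemma cmeet (hσe : σ ≤ e)
    (hp : (e < p ∧ p < ⊤) ∨ (Incomp p e ∧ ¬ Incomp p σ))
    (hmeet : ∀ x y : L, Incomp x e → Incomp x σ → Incomp y e → Incomp y σ →
      x ≠ y → x ⊓ y = ⊥)
    (hmp : ∀ x : L, Incomp x e → Incomp x σ → Incomp x p → x ⊓ p = ⊥)
    {x y : L} (hx : Incomp x e ∧ Incomp x σ) (hy : Incomp y e ∧ Incomp y σ) :
    (x = y ∧ x ≤ p ∧ x ⊓ y ⊓ p = x) ∨ x ⊓ y ⊓ p = ⊥ := by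
  by_cases hxy : x = y
  · subst hxy
    by_cases hip : Incomp x p
    · right; rw [inf_idem]; exact hmp x hx.1 hx.2 hip
    · have hxp : x ≤ p := by
        rcases not_and_or.mp hip with h | h
        · exact not_not.mp h
        · exact absurd (not_not.mp h) (p_nle hσe hp hx)
      left; exact ⟨rfl, hxp, by rw [inf_idem, inf_eq_left.mpr hxp]⟩
  · right; rw [hmeet x y hx.1 hx.2 hy.1 hy.2 hxy, bot_inf_eq]

lemma upNN (hσe : σ ≤ e)
    (hp : (e < p ∧ p < ⊤) ∨ (Incomp p e ∧ ¬ Incomp p σ))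
    (hmeet : ∀ x y : L, Incomp x e → Incomp x σ → Incomp y e → Incomp y σ →
      x ≠ y → x ⊓ y = ⊥)
    (hmp : ∀ x : L, Incomp x e → Incomp x σ → Incomp x p → x ⊓ p = ⊥)
    {a b : L} (ha : ¬ σ ≤ a) (hb : ¬ σ ≤ b) :
    Up Ustar σ e p a b = ⊥ ∨
      ((Incomp a e ∧ Incomp a σ) ∧ a = b ∧ a ≤ p ∧ Up Ustar σ e p a b = a) := by
  have hbe : ¬ e ≤ b := fun h => hb (hσe.trans h)
  by_cases hca : Incomp a e ∧ Incomp a σ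
  · by_cases hcb : Incomp b e ∧ Incomp b σ
    · rw [up_eq4 hca hcb]
      rcases cmeet hσe hp hmeet hmp hca hcb with ⟨h1, h2, h3⟩ | h
      · exact Or.inr ⟨hca, h1, h2, h3⟩
      · exact Or.inl h
    · exact Or.inl (up_eq_bot hca.1.2 hbe (Or.inl ha) (Or.inr hcb))
  · exact Or.inl (up_eq_bot (fun h => ha (hσe.trans h)) hbe (Or.inl ha) (Or.inl hca))

lemma classify3 (x : L) (σ e : L) :
    e ≤ x ∨ (σ ≤ x ∧ ¬ e ≤ x) ∨ ¬ σ ≤ x := by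
  by_cases h1 : e ≤ x
  · exact Or.inl h1
  by_cases h2 : σ ≤ x
  · exact Or.inr (Or.inl ⟨h2, h1⟩)
  · exact Or.inr (Or.inr h2)

lemma up_assoc (hσe : σ ≤ e) (hσ0 : σ ≠ ⊥)
    (hcl : ∀ x : L, σ ≤ x → ∀ y : L, σ ≤ y → σ ≤ Ustar x y)
    (hassoc : ∀ x : L, σ ≤ x → ∀ y : L, σ ≤ y → ∀ z : L, σ ≤ z →
      Ustar (Ustar x y) z = Ustar x (Ustar y z))
    (hmono : ∀ x : L, σ ≤ x → ∀ y : L, σ ≤ y → ∀ z : L, σ ≤ z → x ≤ y →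
      Ustar x z ≤ Ustar y z ∧ Ustar z x ≤ Ustar z y)
    (hn : ∀ x : L, σ ≤ x → Ustar e x = x ∧ Ustar x e = x)
    (hUt : ∀ x : L, σ ≤ x → ∀ y : L, σ ≤ y → e ≤ Ustar x y → e ≤ x ∧ e ≤ y)
    (hp : (e < p ∧ p < ⊤) ∨ (Incomp p e ∧ ¬ Incomp p σ))
    (hmeet : ∀ x y : L, Incomp x e → Incomp x σ → Incomp y e → Incomp y σ →
      x ≠ y → x ⊓ y = ⊥)
    (hmp : ∀ x : L, Incomp x e → Incomp x σ → Incomp x p → x ⊓ p = ⊥)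
    (x y z : L) :
    Up Ustar σ e p (Up Ustar σ e p x y) z = Up Ustar σ e p x (Up Ustar σ e p y z) := by
  have bσ : ∀ {w : L}, ¬ σ ≤ w → ¬ e ≤ w := fun h he => h (hσe.trans he)
  have eA : ∀ {a b : L}, e ≤ a → e ≤ b → e ≤ Ustar a b := by
    intro a b ha hb
    have h1 : Ustar e b ≤ Ustar a b :=
      (hmono e hσe a (hσe.trans ha) b (hσe.trans hb) ha).1
    rw [(hn b (hσe.trans hb)).1] at h1
    exact hb.trans h1
  have nA : ∀ {a b : L}, σ ≤ a → σ ≤ b → ¬ e ≤ a ∨ ¬ e ≤ b → ¬ e ≤ Ustar a b :=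
    fun ha hb h he => h.elim (fun c => c (hUt _ ha _ hb he).1)
      (fun c => c (hUt _ ha _ hb he).2)
  have nCσ : ∀ {w : L}, σ ≤ w → ¬ (Incomp w e ∧ Incomp w σ) := fun h hc => hc.2.2 h
  have core : ∀ a b c : L, σ ≤ a → σ ≤ b → σ ≤ c →
      Up Ustar σ e p (Up Ustar σ e p a b) c = Up Ustar σ e p a (Up Ustar σ e p b c) := by
    intro a b c ha hb hc
    rw [up_eq1 ha hb, up_eq1 (hcl a ha b hb) hc, up_eq1 hb hc,
      up_eq1 ha (hcl b hb c hc), hassoc a ha b hb c hc]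
  have upNN' := fun {a b : L} (ha : ¬ σ ≤ a) (hb : ¬ σ ≤ b) =>
    upNN hσe hp hmeet hmp ha hb (Ustar := Ustar)
  rcases classify3 x σ e with hx | hx | hx <;>
    rcases classify3 y σ e with hy | hy | hy <;>
      rcases classify3 z σ e with hz | hz | hz
  -- (1,1,1)
  · exact core x y z (hσe.trans hx) (hσe.trans hy) (hσe.trans hz)
  -- (1,1,2)
  · exact core x y z (hσe.trans hx) (hσe.trans hy) hz.1
  -- (1,1,N)
  · rw [up_eq1 (hσe.trans hx) (hσe.trans hy), up_eq3 hσe (eA hx hy) hz,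
      up_eq3 hσe hy hz, up_eq3 hσe hx hz]
  -- (1,2,1)
  · exact core x y z (hσe.trans hx) hy.1 (hσe.trans hz)
  -- (1,2,2)
  · exact core x y z (hσe.trans hx) hy.1 hz.1
  -- (1,2,N)
  · rw [up_eq1 (hσe.trans hx) hy.1,
      up_eq_bot (nA (hσe.trans hx) hy.1 (Or.inr hy.2)) (bσ hz) (Or.inr hz)
        (Or.inl (nCσ (hcl x (hσe.trans hx) y hy.1))),
      up_eq_bot hy.2 (bσ hz) (Or.inr hz) (Or.inl (nCσ hy.1)),
      up_bot_right hσe hσ0]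
  -- (1,N,1)
  · rw [up_eq3 hσe hx hy, up_eq2 hy hz, up_eq3 hσe hx hy]
  -- (1,N,2)
  · rw [up_eq3 hσe hx hy,
      up_eq_bot (bσ hy) hz.2 (Or.inl hy) (Or.inr (nCσ hz.1)),
      up_bot_right hσe hσ0]
  -- (1,N,N)
  · rcases upNN' hy hz with h | ⟨hcy, heq, hyp, h⟩
    · rw [up_eq3 hσe hx hy, h, up_bot_right hσe hσ0]
    · rw [up_eq3 hσe hx hy, h, up_eq3 hσe hx hy, heq]
  -- (2,1,1)
  · exact core x y z hx.1 (hσe.trans hy) (hσe.trans hz)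
  -- (2,1,2)
  · exact core x y z hx.1 (hσe.trans hy) hz.1
  -- (2,1,N)
  · rw [up_eq1 hx.1 (hσe.trans hy),
      up_eq_bot (nA hx.1 (hσe.trans hy) (Or.inl hx.2)) (bσ hz) (Or.inr hz)
        (Or.inl (nCσ (hcl x hx.1 y (hσe.trans hy)))),
      up_eq3 hσe hy hz,
      up_eq_bot hx.2 (bσ hz) (Or.inr hz) (Or.inl (nCσ hx.1))]
  -- (2,2,1)
  · exact core x y z hx.1 hy.1 (hσe.trans hz)
  -- (2,2,2)
  · exact core x y z hx.1 hy.1 hz.1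
  -- (2,2,N)
  · rw [up_eq1 hx.1 hy.1,
      up_eq_bot (nA hx.1 hy.1 (Or.inl hx.2)) (bσ hz) (Or.inr hz)
        (Or.inl (nCσ (hcl x hx.1 y hy.1))),
      up_eq_bot hy.2 (bσ hz) (Or.inr hz) (Or.inl (nCσ hy.1)),
      up_bot_right hσe hσ0]
  -- (2,N,1)
  · rw [up_eq_bot hx.2 (bσ hy) (Or.inr hy) (Or.inl (nCσ hx.1)),
      up_bot_left hσe hσ0, up_eq2 hy hz,
      up_eq_bot hx.2 (bσ hy) (Or.inr hy) (Or.inl (nCσ hx.1))]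
  -- (2,N,2)
  · rw [up_eq_bot hx.2 (bσ hy) (Or.inr hy) (Or.inl (nCσ hx.1)),
      up_bot_left hσe hσ0,
      up_eq_bot (bσ hy) hz.2 (Or.inl hy) (Or.inr (nCσ hz.1)),
      up_bot_right hσe hσ0]
  -- (2,N,N)
  · rcases upNN' hy hz with h | ⟨hcy, heq, hyp, h⟩
    · rw [up_eq_bot hx.2 (bσ hy) (Or.inr hy) (Or.inl (nCσ hx.1)),
        up_bot_left hσe hσ0, h, up_bot_right hσe hσ0]
    · rw [up_eq_bot hx.2 (bσ hy) (Or.inr hy) (Or.inl (nCσ hx.1)),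
        up_bot_left hσe hσ0, h,
        up_eq_bot hx.2 (bσ hy) (Or.inr hy) (Or.inl (nCσ hx.1))]
  -- (N,1,1)
  · rw [up_eq2 hx hy, up_eq2 hx hz, up_eq1 (hσe.trans hy) (hσe.trans hz),
      up_eq2 hx (eA hy hz)]
  -- (N,1,2)
  · rw [up_eq2 hx hy,
      up_eq_bot (bσ hx) hz.2 (Or.inl hx) (Or.inr (nCσ hz.1)),
      up_eq1 (hσe.trans hy) hz.1,
      up_eq_bot (bσ hx) (nA (hσe.trans hy) hz.1 (Or.inr hz.2)) (Or.inl hx)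
        (Or.inr (nCσ (hcl y (hσe.trans hy) z hz.1)))]
  -- (N,1,N)
  · rw [up_eq2 hx hy, up_eq3 hσe hy hz]
  -- (N,2,1)
  · rw [up_eq_bot (bσ hx) hy.2 (Or.inl hx) (Or.inr (nCσ hy.1)),
      up_bot_left hσe hσ0, up_eq1 hy.1 (hσe.trans hz),
      up_eq_bot (bσ hx) (nA hy.1 (hσe.trans hz) (Or.inl hy.2)) (Or.inl hx)
        (Or.inr (nCσ (hcl y hy.1 z (hσe.trans hz))))]
  -- (N,2,2)
  · rw [up_eq_bot (bσ hx) hy.2 (Or.inl hx) (Or.inr (nCσ hy.1)),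
      up_bot_left hσe hσ0, up_eq1 hy.1 hz.1,
      up_eq_bot (bσ hx) (nA hy.1 hz.1 (Or.inl hy.2)) (Or.inl hx)
        (Or.inr (nCσ (hcl y hy.1 z hz.1)))]
  -- (N,2,N)
  · rw [up_eq_bot (bσ hx) hy.2 (Or.inl hx) (Or.inr (nCσ hy.1)),
      up_bot_left hσe hσ0,
      up_eq_bot hy.2 (bσ hz) (Or.inr hz) (Or.inl (nCσ hy.1)),
      up_bot_right hσe hσ0]
  -- (N,N,1)
  · rcases upNN' hx hy with h | ⟨hcx, heq, hxp, h⟩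
    · rw [h, up_bot_left hσe hσ0, up_eq2 hy hz, h]
    · rw [h, up_eq2 hx hz, up_eq2 hy hz, h]
  -- (N,N,2)
  · rcases upNN' hx hy with h | ⟨hcx, heq, hxp, h⟩
    · rw [h, up_bot_left hσe hσ0,
        up_eq_bot (bσ hy) hz.2 (Or.inl hy) (Or.inr (nCσ hz.1)),
        up_bot_right hσe hσ0]
    · rw [h, up_eq_bot (bσ hx) hz.2 (Or.inl hx) (Or.inr (nCσ hz.1)),
        up_eq_bot (bσ hy) hz.2 (Or.inl hy) (Or.inr (nCσ hz.1)),
        up_bot_right hσe hσ0]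
  -- (N,N,N)
  · rcases upNN' hx hy with h1 | ⟨hcx, heq1, hxp, h1⟩ <;>
      rcases upNN' hy hz with h2 | ⟨hcy, heq2, hyp, h2⟩
    · rw [h1, up_bot_left hσe hσ0, h2, up_bot_right hσe hσ0]
    · rw [h1, up_bot_left hσe hσ0, h2, h1]
    · rw [h1, heq1, h2, up_bot_right hσe hσ0]
    · rw [h1, h2, heq2]

lemma classify (hσe : σ ≤ e) (x : L) :
    e ≤ x ∨ (σ ≤ x ∧ ¬ e ≤ x) ∨ (Incomp x e ∧ Incomp x σ) ∨
      (¬ σ ≤ x ∧ ¬ e ≤ x ∧ ¬ (Incomp x e ∧ Incomp x σ)) := by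
  by_cases h1 : e ≤ x
  · exact Or.inl h1
  by_cases h2 : σ ≤ x
  · exact Or.inr (Or.inl ⟨h2, h1⟩)
  by_cases h3 : Incomp x e ∧ Incomp x σ
  · exact Or.inr (Or.inr (Or.inl h3))
  · exact Or.inr (Or.inr (Or.inr ⟨h2, h1, h3⟩))

lemma up_comm (hσe : σ ≤ e)
    (hc : ∀ x : L, σ ≤ x → ∀ y : L, σ ≤ y → Ustar x y = Ustar y x)
    (x y : L) : Up Ustar σ e p x y = Up Ustar σ e p y x := by
  rcases classify hσe x with hx | hx | hx | hx <;>
    rcases classify hσe y with hy | hy | hy | hy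
  · rw [up_eq1 (hσe.trans hx) (hσe.trans hy), up_eq1 (hσe.trans hy) (hσe.trans hx),
      hc x (hσe.trans hx) y (hσe.trans hy)]
  · rw [up_eq1 (hσe.trans hx) hy.1, up_eq1 hy.1 (hσe.trans hx),
      hc x (hσe.trans hx) y hy.1]
  · rw [up_eq3 hσe hx hy.2.2, up_eq2 hy.2.2 hx]
  · rw [up_eq3 hσe hx hy.1, up_eq2 hy.1 hx]
  · rw [up_eq1 hx.1 (hσe.trans hy), up_eq1 (hσe.trans hy) hx.1,
      hc x hx.1 y (hσe.trans hy)]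
  · rw [up_eq1 hx.1 hy.1, up_eq1 hy.1 hx.1, hc x hx.1 y hy.1]
  · rw [up_eq_bot hx.2 hy.1.2 (Or.inr hy.2.2) (Or.inl (fun h => h.2.2 hx.1)),
      up_eq_bot hy.1.2 hx.2 (Or.inl hy.2.2) (Or.inr (fun h => h.2.2 hx.1))]
  · rw [up_eq_bot hx.2 hy.2.1 (Or.inr hy.1) (Or.inr hy.2.2),
      up_eq_bot hy.2.1 hx.2 (Or.inl hy.1) (Or.inl hy.2.2)]
  · rw [up_eq2 hx.2.2 hy, up_eq3 hσe hy hx.2.2]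
  · rw [up_eq_bot hx.1.2 hy.2 (Or.inl hx.2.2) (Or.inr (fun h => h.2.2 hy.1)),
      up_eq_bot hy.2 hx.1.2 (Or.inr hx.2.2) (Or.inl (fun h => h.2.2 hy.1))]
  · rw [up_eq4 hx hy, up_eq4 hy hx, inf_comm y x]
  · rw [up_eq_bot hx.1.2 hy.2.1 (Or.inl hx.2.2) (Or.inr hy.2.2),
      up_eq_bot hy.2.1 hx.1.2 (Or.inr hx.2.2) (Or.inl hy.2.2)]
  · rw [up_eq2 hx.1 hy, up_eq3 hσe hy hx.1]
  · rw [up_eq_bot hx.2.1 hy.2 (Or.inl hx.1) (Or.inl hx.2.2),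
      up_eq_bot hy.2 hx.2.1 (Or.inr hx.1) (Or.inr hx.2.2)]
  · rw [up_eq_bot hx.2.1 hy.1.2 (Or.inl hx.1) (Or.inl hx.2.2),
      up_eq_bot hy.1.2 hx.2.1 (Or.inr hx.1) (Or.inr hx.2.2)]
  · rw [up_eq_bot hx.2.1 hy.2.1 (Or.inl hx.1) (Or.inl hx.2.2),
      up_eq_bot hy.2.1 hx.2.1 (Or.inr hx.1) (Or.inr hx.2.2)]

lemma up_neutral (hσe : σ ≤ e)
    (hn : ∀ x : L, σ ≤ x → Ustar e x = x ∧ Ustar x e = x)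
    (x : L) : Up Ustar σ e p e x = x ∧ Up Ustar σ e p x e = x := by
  by_cases hx : σ ≤ x
  · rw [up_eq1 hσe hx, up_eq1 hx hσe]; exact hn x hx
  · rw [up_eq3 hσe le_rfl hx, up_eq2 hx le_rfl]; exact ⟨rfl, rfl⟩

lemma up_mono (hσe : σ ≤ e)
    (hmono : ∀ x : L, σ ≤ x → ∀ y : L, σ ≤ y → ∀ z : L, σ ≤ z → x ≤ y →
      Ustar x z ≤ Ustar y z ∧ Ustar z x ≤ Ustar z y)
    (hn : ∀ x : L, σ ≤ x → Ustar e x = x ∧ Ustar x e = x)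
    (hb : ∀ x y : L, Incomp x e → Incomp x σ → ¬ Incomp x p →
      Incomp y e → ¬ Incomp y σ → Incomp x y)
    (hmeet : ∀ x y : L, Incomp x e → Incomp x σ → Incomp y e → Incomp y σ →
      x ≠ y → x ⊓ y = ⊥)
    (hmp : ∀ x : L, Incomp x e → Incomp x σ → Incomp x p → x ⊓ p = ⊥)
    {x y : L} (z : L) (hxy : x ≤ y) :
    Up Ustar σ e p x z ≤ Up Ustar σ e p y z := by
  rcases classify hσe z with hz | hz | hz | hz
  · -- z ∈ [e, ⊤]
    by_cases hsx : σ ≤ x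
    · rw [up_eq1 hsx (hσe.trans hz), up_eq1 (hsx.trans hxy) (hσe.trans hz)]
      exact (hmono x hsx y (hsx.trans hxy) z (hσe.trans hz) hxy).1
    · rw [up_eq2 hsx hz]
      by_cases hsy : σ ≤ y
      · rw [up_eq1 hsy (hσe.trans hz)]
        calc x ≤ y := hxy
          _ = Ustar y e := (hn y hsy).2.symm
          _ ≤ Ustar y z := (hmono e hσe z (hσe.trans hz) y hsy hz).2
      · rw [up_eq2 hsy hz]; exact hxy
  · -- z ∈ A2
    by_cases hsx : σ ≤ x
    · rw [up_eq1 hsx hz.1, up_eq1 (hsx.trans hxy) hz.1]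
      exact (hmono x hsx y (hsx.trans hxy) z hz.1 hxy).1
    · rw [up_eq_bot (fun h => hsx (hσe.trans h)) hz.2 (Or.inl hsx)
        (Or.inr (fun h => h.2.2 hz.1))]
      exact bot_le
  · -- z ∈ C
    by_cases hex : e ≤ x
    · rw [up_eq3 hσe hex hz.2.2, up_eq3 hσe (hex.trans hxy) hz.2.2]
    · by_cases hcx : Incomp x e ∧ Incomp x σ
      · rw [up_eq4 hcx hz]
        rcases classify hσe y with hey | hay | hcy | hdy
        · rw [up_eq3 hσe hey hz.2.2]
          exact inf_le_of_left_le inf_le_right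
        · by_cases hxz : x = z
          · by_cases hip : Incomp x p
            · rw [← hxz, inf_idem, hmp x hcx.1 hcx.2 hip]; exact bot_le
            · exact absurd hxy (hb x y hcx.1 hcx.2 hip
                ⟨fun h => hcx.1.1 (hxy.trans h), hay.2⟩ (fun h => h.2 hay.1)).1
          · rw [hmeet x z hcx.1 hcx.2 hz.1 hz.2 hxz, bot_inf_eq]; exact bot_le
        · rw [up_eq4 hcy hz]
          exact inf_le_inf_right p (inf_le_inf_right z hxy)
        · exfalso
          rcases not_and_or.mp hdy.2.2 with h | h
          · rcases not_and_or.mp h with h' | h'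
            · exact hcx.1.1 (hxy.trans (not_not.mp h'))
            · exact hdy.2.1 (not_not.mp h')
          · rcases not_and_or.mp h with h' | h'
            · exact hcx.2.1 (hxy.trans (not_not.mp h'))
            · exact hdy.1 (not_not.mp h')
      · rw [up_eq_bot hex hz.1.2 (Or.inr hz.2.2) (Or.inl hcx)]
        exact bot_le
  · -- z ∈ D
    by_cases hex : e ≤ x
    · rw [up_eq3 hσe hex hz.1, up_eq3 hσe (hex.trans hxy) hz.1]
    · rw [up_eq_bot hex hz.2.1 (Or.inr hz.1) (Or.inr hz.2.2)]
      exact bot_le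

end Aux

theorem statement5 [Lattice L] [BoundedOrder L]
    (σ e p : L) (Ustar : L → L → L)
    (hσ0 : σ ≠ ⊥) (hσ1 : σ ≠ ⊤)
    (hU : IsUninormOn Ustar {x : L | σ ≤ x} e)
    (hp : (e < p ∧ p < ⊤) ∨ (Incomp p e ∧ ¬ Incomp p σ))
    (hmeet : ∀ x y : L, Incomp x e → Incomp x σ → Incomp y e → Incomp y σ →
      x ≠ y → x ⊓ y = ⊥)
    (hmp : ∀ x : L, Incomp x e → Incomp x σ → Incomp x p → x ⊓ p = ⊥)
    (hne : ∃ x : L, (Incomp x σ ∧ ¬ Incomp x e) ∨ (Incomp x e ∧ Incomp x σ) ∨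
      (⊥ < x ∧ x < σ)) :
    IsUninormOn (Up Ustar σ e p) Set.univ e ↔
      ((∀ x : L, σ ≤ x → ∀ y : L, σ ≤ y → e ≤ Ustar x y → e ≤ x ∧ e ≤ y) ∧
        ∀ x y : L, Incomp x e → Incomp x σ → ¬ Incomp x p →
          Incomp y e → ¬ Incomp y σ → Incomp x y) := by
  have hσe : σ ≤ e := hU.1
  constructor
  · intro h
    obtain ⟨-, -, hcm, has, hmo, hnt⟩ := h
    have hz : ∃ z : L, ¬ σ ≤ z ∧ z ≠ ⊥ := by
      obtain ⟨z, hzc⟩ := hne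
      rcases hzc with ⟨h1, h2⟩ | ⟨h1, h2⟩ | ⟨h1, h2⟩
      · exact ⟨z, h1.2, fun hb => h1.1 (hb ▸ bot_le)⟩
      · exact ⟨z, h2.2, fun hb => h2.1 (hb ▸ bot_le)⟩
      · exact ⟨z, fun hσz => absurd (lt_of_le_of_lt hσz h2) (lt_irrefl σ), h1.ne'⟩
    obtain ⟨z, hzσ, hz0⟩ := hz
    have hze : ¬ e ≤ z := fun h' => hzσ (hσe.trans h')
    constructor
    · intro x hx y hy hUe
      constructor
      · by_contra hex
        have h1 : Up Ustar σ e p z x = ⊥ :=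
          up_eq_bot hze hex (Or.inl hzσ) (Or.inr (fun hc => hc.2.2 hx))
        have h2 := has z trivial x trivial y trivial
        rw [h1, up_bot_left hσe hσ0, up_eq1 hx hy, up_eq2 hzσ hUe] at h2
        exact hz0 h2.symm
      · by_contra hey
        have h1 : Up Ustar σ e p y z = ⊥ :=
          up_eq_bot hey hze (Or.inr hzσ) (Or.inl (fun hc => hc.2.2 hy))
        have h2 := has x trivial y trivial z trivial
        rw [up_eq1 hx hy, up_eq3 hσe hUe hzσ, h1, up_bot_right hσe hσ0] at h2
        exact hz0 h2
    · intro x y hxe hxσ hxp hye hyσ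
      have hσy : σ ≤ y := by
        rcases not_and_or.mp hyσ with h | h
        · exact absurd ((not_not.mp h).trans hσe) hye.1
        · exact not_not.mp h
      constructor
      · intro hxy
        have hm := (hmo x trivial y trivial x trivial hxy).1
        rw [up_eq4 ⟨hxe, hxσ⟩ ⟨hxe, hxσ⟩,
          up_eq_bot hye.2 hxe.2 (Or.inr hxσ.2) (Or.inl (fun hc => hc.2.2 hσy))] at hm
        have hxp' : x ≤ p := by
          rcases not_and_or.mp hxp with h | h
          · exact not_not.mp h
          · exact absurd (not_not.mp h) (p_nle hσe hp ⟨hxe, hxσ⟩)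
        rw [inf_idem, inf_eq_left.mpr hxp'] at hm
        exact hxe.1 ((le_bot_iff.mp hm) ▸ bot_le)
      · intro hyx
        have hm := (hmo y trivial x trivial y trivial hyx).1
        rw [up_eq1 hσy hσy,
          up_eq_bot hxe.2 hye.2 (Or.inl hxσ.2) (Or.inr (fun hc => hc.2.2 hσy))] at hm
        exact hσ0 (le_bot_iff.mp ((hU.2.1 y hσy y hσy).trans hm))
  · rintro ⟨hUt, hb⟩
    obtain ⟨-, hcl, hucomm, huassoc, humono, hun⟩ := hU
    refine ⟨trivial, fun _ _ _ _ => trivial,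
      fun x _ y _ => up_comm hσe hucomm x y,
      fun x _ y _ z _ => up_assoc hσe hσ0 hcl huassoc humono hun hUt hp hmeet hmp x y z,
      fun x _ y _ z _ hxy => ⟨up_mono hσe humono hun hb hmeet hmp z hxy, ?_⟩,
      fun x _ => up_neutral hσe hun x⟩
    rw [up_comm hσe hucomm z x, up_comm hσe hucomm z y]
    exact up_mono hσe humono hun hb hmeet hmp z hxy
end
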